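/- The graph G_5 (on 10 vertices: u, v, u_1,...,u_5, z, z_1, z_2, with u and v adjacent to all u_i for 1≤i≤5, z adjacent to u_1, u_2, z_1, z_2, z_1 adjacent to u_3 and u_4, z_2 adjacent to u_3 and u_5) is (3,1)-edge-critical: χ_1(G_5) = 3 and for every edge e of G_5, χ_1(G_5 − e) = 2. -/
import Mathlib


open SimpleGraph

/-- A set `U` is `k`-independent in `G` if every vertex of `U` has at most `k`
neighbours inside `U` (i.e. the induced subgraph has maximum degree at most `k`). -/
def KIndep {V : Type*} (G : SimpleGraph V) (k : ℕ) (U : Set V) : Prop :=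
  ∀ v ∈ U, {w | w ∈ U ∧ G.Adj v w}.ncard ≤ k

/-- `G` is `(m,k)`-colourable: the vertices can be coloured with `m` colours so that
every colour class is `k`-independent. -/
def DefColorable {V : Type*} (G : SimpleGraph V) (m k : ℕ) : Prop :=
  ∃ c : V → Fin m, ∀ i : Fin m, KIndep G k {v | c v = i}

/-- The `k`-defective chromatic number: the least `m` such that `G` is `(m,k)`-colourable. -/
noncomputable def defChrom {V : Type*} (G : SimpleGraph V) (k : ℕ) : ℕ :=
  sInf {m | DefColorable G m k}

/-- The graph `G₅` on 10 vertices: `0 = u`, `1 = v`, `2,…,6 = u₁,…,u₅`, `7 = z`,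
`8 = z₁`, `9 = z₂`. -/
def GraphG5 : SimpleGraph (Fin 10) :=
  SimpleGraph.fromRel (fun a b =>
    (a = 0 ∧ b ∈ ({2, 3, 4, 5, 6} : Set (Fin 10))) ∨
    (a = 1 ∧ b ∈ ({2, 3, 4, 5, 6} : Set (Fin 10))) ∨
    (a = 7 ∧ b ∈ ({2, 3, 8, 9} : Set (Fin 10))) ∨
    (a = 8 ∧ b ∈ ({4, 5} : Set (Fin 10))) ∨
    (a = 9 ∧ b ∈ ({4, 6} : Set (Fin 10))))

section Aux

instance GraphG5.instDec : DecidableRel GraphG5.Adj := fun a b => by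
  unfold GraphG5; rw [SimpleGraph.fromRel_adj]; infer_instance

instance instDecDel (e : Sym2 (Fin 10)) :
    DecidableRel (GraphG5.deleteEdges {e}).Adj := fun a b =>
  decidable_of_iff (GraphG5.Adj a b ∧ ¬ s(a, b) = e)
    (by rw [SimpleGraph.deleteEdges_adj]; simp)

lemma ncard_filter (P : Fin 10 → Prop) [DecidablePred P] :
    {w | P w}.ncard = (Finset.univ.filter P).card := by
  rw [← Set.ncard_coe_finset]
  congr 1
  ext w
  simp

lemma two_le_ncard {s : Set (Fin 10)} {a b : Fin 10} (ha : a ∈ s) (hb : b ∈ s)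
    (hab : a ≠ b) : 2 ≤ s.ncard :=
  (Set.one_lt_ncard (Set.toFinite s)).2 ⟨a, ha, b, hb, hab⟩

lemma kindep_iff {m : ℕ} (G : SimpleGraph (Fin 10)) [DecidableRel G.Adj] (k : ℕ)
    (c : Fin 10 → Fin m) (i : Fin m) :
    KIndep G k {v | c v = i} ↔
      ∀ v, c v = i →
        (Finset.univ.filter (fun w => c w = i ∧ G.Adj v w)).card ≤ k := by
  unfold KIndep
  simp only [Set.mem_setOf_eq]
  constructor
  · intro h v hv
    have := h v hv
    rwa [ncard_filter (fun w => c w = i ∧ G.Adj v w)] at this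
  · intro h v hv
    rw [ncard_filter (fun w => c w = i ∧ G.Adj v w)]
    exact h v hv

lemma defColorable_mono {V : Type*} (G : SimpleGraph V) {m n k : ℕ}
    (h : DefColorable G m k) (hmn : m ≤ n) : DefColorable G n k := by
  obtain ⟨c, hc⟩ := h
  refine ⟨fun v => Fin.castLE hmn (c v), fun i v hv => ?_⟩
  have hv' : Fin.castLE hmn (c v) = i := hv
  have hset : {w | w ∈ {x | Fin.castLE hmn (c x) = i} ∧ G.Adj v w} =
      {w | w ∈ {x | c x = c v} ∧ G.Adj v w} := by
    ext w
    simp only [Set.mem_setOf_eq]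
    constructor
    · rintro ⟨h1, h2⟩
      exact ⟨Fin.castLE_injective hmn (h1.trans hv'.symm), h2⟩
    · rintro ⟨h1, h2⟩
      exact ⟨by rw [h1, hv'], h2⟩
  rw [hset]
  exact hc (c v) v rfl

lemma defChrom_eq_of {V : Type*} (G : SimpleGraph V) {k m : ℕ}
    (h1 : DefColorable G m k) (h2 : ¬ DefColorable G (m - 1) k) :
    defChrom G k = m := by
  refine le_antisymm (Nat.sInf_le h1) (le_csInf ⟨m, h1⟩ fun b hb => ?_)
  by_contra hlt
  push_neg at hlt
  exact h2 (defColorable_mono G hb (by omega))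

lemma not2 : ¬ DefColorable GraphG5 2 1 := by
  rintro ⟨c, h⟩
  have key : ∀ v a b : Fin 10, a ≠ b → c a = c v → c b = c v →
      GraphG5.Adj v a → GraphG5.Adj v b → False := by
    intro v a b hab ha hb hva hvb
    have h1 := h (c v) v rfl
    have h2 : 2 ≤ {w | w ∈ {x | c x = c v} ∧ GraphG5.Adj v w}.ncard :=
      two_le_ncard ⟨ha, hva⟩ ⟨hb, hvb⟩ hab
    omega
  have feq : ∀ x y z : Fin 2, x ≠ z → y ≠ z → x = y := by decide
  by_cases h01 : c 0 = c 1
  · have hu : ∀ i : Fin 10, GraphG5.Adj i 0 → GraphG5.Adj i 1 → c i ≠ c 0 := by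
      intro i hi0 hi1 hci
      exact key i 0 1 (by decide) hci.symm (h01 ▸ hci.symm) hi0 hi1
    have h2 : c 2 ≠ c 0 := hu 2 (by decide) (by decide)
    have h3 : c 3 ≠ c 0 := hu 3 (by decide) (by decide)
    have h4 : c 4 ≠ c 0 := hu 4 (by decide) (by decide)
    have h5 : c 5 ≠ c 0 := hu 5 (by decide) (by decide)
    have h6 : c 6 ≠ c 0 := hu 6 (by decide) (by decide)
    have h8 : c 8 = c 0 := by
      by_contra h8
      exact key 8 4 5 (by decide) (feq _ _ _ h4 h8) (feq _ _ _ h5 h8)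
        (by decide) (by decide)
    have h9 : c 9 = c 0 := by
      by_contra h9
      exact key 9 4 6 (by decide) (feq _ _ _ h4 h9) (feq _ _ _ h6 h9)
        (by decide) (by decide)
    by_cases h7 : c 7 = c 0
    · exact key 7 8 9 (by decide) (h8.trans h7.symm) (h9.trans h7.symm)
        (by decide) (by decide)
    · exact key 7 2 3 (by decide) (feq _ _ _ h2 h7) (feq _ _ _ h3 h7)
        (by decide) (by decide)
  · have tri : ∀ x y z : Fin 2, x = y ∨ x = z ∨ y = z := by decide
    have two : ∀ x y : Fin 2, x = y ∨ x ≠ y := fun x y => em _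
    have pick : ∀ a b : Fin 10, a ≠ b → c a = c b →
        GraphG5.Adj 0 a → GraphG5.Adj 0 b →
        GraphG5.Adj 1 a → GraphG5.Adj 1 b → False := by
      intro a b hab hcab h0a h0b h1a h1b
      rcases two (c a) (c 0) with h | h
      · exact key 0 a b hab h (hcab.symm.trans h) h0a h0b
      · have h' : c a = c 1 := feq _ _ _ h (fun hh => h01 hh.symm)
        exact key 1 a b hab h' (hcab.symm.trans h') h1a h1b
    rcases tri (c 2) (c 3) (c 4) with hp | hp | hp
    · exact pick 2 3 (by decide) hp (by decide) (by decide) (by decide) (by decide)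
    · exact pick 2 4 (by decide) hp (by decide) (by decide) (by decide) (by decide)
    · exact pick 3 4 (by decide) hp (by decide) (by decide) (by decide) (by decide)

lemma solve (a b : Fin 10) (c : Fin 10 → Fin 2)
    (hc : ∀ i : Fin 2, ∀ v, c v = i →
      (Finset.univ.filter (fun w => c w = i ∧
        (GraphG5.deleteEdges {s(a, b)}).Adj v w)).card ≤ 1)
    (x y : Fin 10) (hxy : x ≠ y)
    (hx : (GraphG5.deleteEdges {s(a, b)}).Adj 0 x)
    (hy : (GraphG5.deleteEdges {s(a, b)}).Adj 0 y) :
    defChrom (GraphG5.deleteEdges {s(a, b)}) 1 = 2 := by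
  apply defChrom_eq_of
  · exact ⟨c, fun i => (kindep_iff _ _ _ _).2 (hc i)⟩
  · show ¬ DefColorable _ 1 1
    rintro ⟨d, h⟩
    have h1 := h (d 0) 0 rfl
    have h2 : 2 ≤ {w | w ∈ {v | d v = d 0} ∧
        (GraphG5.deleteEdges {s(a, b)}).Adj 0 w}.ncard :=
      two_le_ncard ⟨Subsingleton.elim _ _, hx⟩ ⟨Subsingleton.elim _ _, hy⟩ hxy
    omega

lemma pos3 : DefColorable GraphG5 3 1 := by
  refine ⟨![0, 0, 1, 2, 1, 2, 2, 2, 1, 0], fun i => (kindep_iff _ _ _ _).2 ?_⟩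
  revert i
  decide

end Aux

set_option synthInstance.maxSize 2000 in
set_option synthInstance.maxHeartbeats 1000000 in
set_option maxHeartbeats 1000000 in
/-- G₅ is (3,1)-edge-critical: its 1-defective chromatic number is 3, and deleting
any edge drops it to 2. -/
theorem stmt14 :
    defChrom GraphG5 1 = 3 ∧
      ∀ e ∈ GraphG5.edgeSet, defChrom (GraphG5.deleteEdges {e}) 1 = 2 := by
  constructor
  · exact defChrom_eq_of _ pos3 not2
  · intro e he
    induction e using Sym2.ind with
    | _ a b =>
      rw [SimpleGraph.mem_edgeSet] at he
      have key : ∀ a b : Fin 10, GraphG5.Adj a b → (a = 0 ∧ b = 2) ∨ (a = 2 ∧ b = 0) ∨ (a = 0 ∧ b = 3) ∨ (a = 3 ∧ b = 0) ∨ (a = 0 ∧ b = 4) ∨ (a = 4 ∧ b = 0) ∨ (a = 0 ∧ b = 5) ∨ (a = 5 ∧ b = 0) ∨ (a = 0 ∧ b = 6) ∨ (a = 6 ∧ b = 0) ∨ (a = 1 ∧ b = 2) ∨ (a = 2 ∧ b = 1) ∨ (a = 1 ∧ b = 3) ∨ (a = 3 ∧ b = 1) ∨ (a = 1 ∧ b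 = 4) ∨ (a = 4 ∧ b = 1) ∨ (a = 1 ∧ b = 5) ∨ (a = 5 ∧ b = 1) ∨ (a = 1 ∧ b = 6) ∨ (a = 6 ∧ b = 1) ∨ (a = 7 ∧ b = 2) ∨ (a = 2 ∧ b = 7) ∨ (a = 7 ∧ b = 3) ∨ (a = 3 ∧ b = 7) ∨ (a = 7 ∧ b = 8) ∨ (a = 8 ∧ b = 7) ∨ (a = 7 ∧ b = 9) ∨ (a = 9 ∧ b = 7) ∨ (a = 8 ∧ b = 4) ∨ (a = 4 ∧ b = 8) ∨ (a = 8 ∧ b = 5) ∨ (a = 5 ∧ b = 8) ∨ (a = 9 ∧ b = 4) ∨ (a = 4 ∧ b = 9) ∨ (a = 9 ∧ b = 6) ∨ (a = 6 ∧ b = 9) := by decide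
      rcases key a b he with ⟨ha,hb⟩|⟨ha,hb⟩|⟨ha,hb⟩|⟨ha,hb⟩|⟨ha,hb⟩|⟨ha,hb⟩|⟨ha,hb⟩|⟨ha,hb⟩|⟨ha,hb⟩|⟨ha,hb⟩|⟨ha,hb⟩|⟨ha,hb⟩|⟨ha,hb⟩|⟨ha,hb⟩|⟨ha,hb⟩|⟨ha,hb⟩|⟨ha,hb⟩|⟨ha,hb⟩|⟨ha,hb⟩|⟨ha,hb⟩|⟨ha,hb⟩|⟨ha,hb⟩|⟨ha,hb⟩|⟨ha,hb⟩|⟨ha,hb⟩|⟨ha,hb⟩|⟨ha,hb⟩|⟨ha,hb⟩|⟨ha,hb⟩|⟨ha,hb⟩|⟨ha,hb⟩|⟨ha,hb⟩|⟨ha,hb⟩|⟨ha,hb⟩|⟨ha,hb⟩|⟨ha,hb⟩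
      · subst ha hb; exact solve _ _ ![0,0,0,1,1,1,1,1,0,0] (by decide) 3 4 (by decide) (by decide) (by decide)
      · subst ha hb; exact solve _ _ ![0,0,0,1,1,1,1,1,0,0] (by decide) 3 4 (by decide) (by decide) (by decide)
      · subst ha hb; exact solve _ _ ![0,0,1,0,1,1,1,1,0,0] (by decide) 2 4 (by decide) (by decide) (by decide)
      · subst ha hb; exact solve _ _ ![0,0,1,0,1,1,1,1,0,0] (by decide) 2 4 (by decide) (by decide) (by decide)
      · subst ha hb; exact solve _ _ ![0,0,1,1,0,1,1,0,1,1] (by decide) 2 3 (by decide) (by decide) (by decide)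
      · subst ha hb; exact solve _ _ ![0,0,1,1,0,1,1,0,1,1] (by decide) 2 3 (by decide) (by decide) (by decide)
      · subst ha hb; exact solve _ _ ![0,0,1,1,1,0,1,0,1,0] (by decide) 2 3 (by decide) (by decide) (by decide)
      · subst ha hb; exact solve _ _ ![0,0,1,1,1,0,1,0,1,0] (by decide) 2 3 (by decide) (by decide) (by decide)
      · subst ha hb; exact solve _ _ ![0,0,1,1,1,1,0,0,0,1] (by decide) 2 3 (by decide) (by decide) (by decide)
      · subst ha hb; exact solve _ _ ![0,0,1,1,1,1,0,0,0,1] (by decide) 2 3 (by decide) (by decide) (by decide)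
      · subst ha hb; exact solve _ _ ![0,0,0,1,1,1,1,1,0,0] (by decide) 2 3 (by decide) (by decide) (by decide)
      · subst ha hb; exact solve _ _ ![0,0,0,1,1,1,1,1,0,0] (by decide) 2 3 (by decide) (by decide) (by decide)
      · subst ha hb; exact solve _ _ ![0,0,1,0,1,1,1,1,0,0] (by decide) 2 3 (by decide) (by decide) (by decide)
      · subst ha hb; exact solve _ _ ![0,0,1,0,1,1,1,1,0,0] (by decide) 2 3 (by decide) (by decide) (by decide)
      · subst ha hb; exact solve _ _ ![0,0,1,1,0,1,1,0,1,1] (by decide) 2 3 (by decide) (by decide) (by decide)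
      · subst ha hb; exact solve _ _ ![0,0,1,1,0,1,1,0,1,1] (by decide) 2 3 (by decide) (by decide) (by decide)
      · subst ha hb; exact solve _ _ ![0,0,1,1,1,0,1,0,1,0] (by decide) 2 3 (by decide) (by decide) (by decide)
      · subst ha hb; exact solve _ _ ![0,0,1,1,1,0,1,0,1,0] (by decide) 2 3 (by decide) (by decide) (by decide)
      · subst ha hb; exact solve _ _ ![0,0,1,1,1,1,0,0,0,1] (by decide) 2 3 (by decide) (by decide) (by decide)
      · subst ha hb; exact solve _ _ ![0,0,1,1,1,1,0,0,0,1] (by decide) 2 3 (by decide) (by decide) (by decide)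
      · subst ha hb; exact solve _ _ ![0,0,1,1,1,1,1,1,0,0] (by decide) 2 3 (by decide) (by decide) (by decide)
      · subst ha hb; exact solve _ _ ![0,0,1,1,1,1,1,1,0,0] (by decide) 2 3 (by decide) (by decide) (by decide)
      · subst ha hb; exact solve _ _ ![0,0,1,1,1,1,1,1,0,0] (by decide) 2 3 (by decide) (by decide) (by decide)
      · subst ha hb; exact solve _ _ ![0,0,1,1,1,1,1,1,0,0] (by decide) 2 3 (by decide) (by decide) (by decide)
      · subst ha hb; exact solve _ _ ![0,0,1,1,1,1,1,0,0,0] (by decide) 2 3 (by decide) (by decide) (by decide)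
      · subst ha hb; exact solve _ _ ![0,0,1,1,1,1,1,0,0,0] (by decide) 2 3 (by decide) (by decide) (by decide)
      · subst ha hb; exact solve _ _ ![0,0,1,1,1,1,1,0,0,0] (by decide) 2 3 (by decide) (by decide) (by decide)
      · subst ha hb; exact solve _ _ ![0,0,1,1,1,1,1,0,0,0] (by decide) 2 3 (by decide) (by decide) (by decide)
      · subst ha hb; exact solve _ _ ![0,0,1,1,1,1,1,0,1,0] (by decide) 2 3 (by decide) (by decide) (by decide)
      · subst ha hb; exact solve _ _ ![0,0,1,1,1,1,1,0,1,0] (by decide) 2 3 (by decide) (by decide) (by decide)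
      · subst ha hb; exact solve _ _ ![0,0,1,1,1,1,1,0,1,0] (by decide) 2 3 (by decide) (by decide) (by decide)
      · subst ha hb; exact solve _ _ ![0,0,1,1,1,1,1,0,1,0] (by decide) 2 3 (by decide) (by decide) (by decide)
      · subst ha hb; exact solve _ _ ![0,0,1,1,1,1,1,0,0,1] (by decide) 2 3 (by decide) (by decide) (by decide)
      · subst ha hb; exact solve _ _ ![0,0,1,1,1,1,1,0,0,1] (by decide) 2 3 (by decide) (by decide) (by decide)
      · subst ha hb; exact solve _ _ ![0,0,1,1,1,1,1,0,0,1] (by decide) 2 3 (by decide) (by decide) (by decide)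
      · subst ha hb; exact solve _ _ ![0,0,1,1,1,1,1,0,0,1] (by decide) 2 3 (by decide) (by decide) (by decide)
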